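/- Let N ≥ 1 and fix b ∈ ℝ^N. Then, as a tends to 0 within the Weyl chamber W_N (so that h_N(a) ≠ 0), the ratio det_{1≤j,k≤N}[e^{a_j b_k}] / h_N(a) converges to h_N(b) / ∏_{j=1}^{N} (j−1)!. Equivalently, det_{1≤j,k≤N}[e^{a_j b_k}] = (h_N(a) h_N(b) / ∏_{j=1}^N Γ(j)) · (1 + O(|a|)) as |a| → 0 in W_N. -/

import Mathlib

open Finset Filter

/-- Vandermonde product `h_N(x) = ∏_{j<k} (x_k - x_j)`. -/
noncomputable def vdm (N : ℕ) (x : Fin N → ℝ) : ℝ :=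
  ∏ p ∈ Finset.univ.filter (fun p : Fin N × Fin N => p.1 < p.2), (x p.2 - x p.1)

/-- `det_{1≤j,k≤N}[e^{a_j b_k}]`. -/
noncomputable def expDet (N : ℕ) (a b : Fin N → ℝ) : ℝ :=
  Matrix.det (Matrix.of fun j k => Real.exp (a j * b k))

open Polynomial

variable {N : ℕ}

/-- pairwise product reindexed, grouped by larger index. -/
lemma vdm_eq_Iio (x : Fin N → ℝ) : vdm N x = ∏ j, ∏ i ∈ Finset.Iio j, (x j - x i) := by
  rw [vdm, Finset.prod_filter, ← Finset.univ_product_univ, Finset.prod_product_right]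
  refine Finset.prod_congr rfl fun j _ => ?_
  rw [Finset.prod_ite, Finset.prod_const_one, mul_one]
  refine Finset.prod_congr ?_ fun i _ => rfl
  ext i; simp

lemma vdm_eq_Ioi (x : Fin N → ℝ) : vdm N x = ∏ i, ∏ j ∈ Finset.Ioi i, (x j - x i) := by
  rw [vdm, Finset.prod_filter, ← Finset.univ_product_univ, Finset.prod_product]
  refine Finset.prod_congr rfl fun i _ => ?_
  rw [Finset.prod_ite, Finset.prod_const_one, mul_one]
  refine Finset.prod_congr ?_ fun j _ => rfl
  ext j; simp

lemma vdm_pos {x : Fin N → ℝ} (hx : StrictMono x) : 0 < vdm N x := by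
  refine Finset.prod_pos fun p hp => ?_
  simp only [Finset.mem_filter] at hp
  exact sub_pos.2 (hx hp.2)

lemma leadingCoeff_lagrange_basis {s : Finset (Fin N)} {v : Fin N → ℝ} (hv : Set.InjOn v s)
    {i : Fin N} (hi : i ∈ s) :
    (Lagrange.basis s v i).coeff (s.card - 1) = ∏ l ∈ s.erase i, (v i - v l)⁻¹ := by
  have h1 : (Lagrange.basis s v i).natDegree = s.card - 1 := Lagrange.natDegree_basis hv hi
  rw [← h1, Polynomial.coeff_natDegree, Lagrange.basis, Polynomial.leadingCoeff_prod]
  refine Finset.prod_congr rfl fun l hl => ?_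
  have hne : v i ≠ v l := by
    intro h
    exact (Finset.ne_of_mem_erase hl) (hv (Finset.mem_of_mem_erase hl) hi h.symm)
  rw [Lagrange.basisDivisor, Polynomial.leadingCoeff_mul, Polynomial.leadingCoeff_C,
    (Polynomial.monic_X_sub_C _).leadingCoeff, mul_one]

lemma interpolate_coeff {s : Finset (Fin N)} {v : Fin N → ℝ} (hv : Set.InjOn v s)
    (f : Fin N → ℝ) :
    (Lagrange.interpolate s v f).coeff (s.card - 1)
      = ∑ i ∈ s, f i * ∏ l ∈ s.erase i, (v i - v l)⁻¹ := by
  rw [Lagrange.interpolate_apply, Polynomial.finset_sum_coeff]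
  refine Finset.sum_congr rfl fun i hi => ?_
  rw [Polynomial.coeff_C_mul, leadingCoeff_lagrange_basis hv hi]

/-- Row-reduced matrix: entry `(j,k)` is the leading coefficient (degree `j`) of the
Lagrange interpolation of `x ↦ exp (x * b k)` at nodes `a 0, …, a j`. -/
noncomputable def Rmat (N : ℕ) (a b : Fin N → ℝ) : Matrix (Fin N) (Fin N) ℝ :=
  Matrix.of fun j k =>
    (Lagrange.interpolate (Finset.Iic j) a fun i => Real.exp (a i * b k)).coeff (j : ℕ)

lemma card_Iic_fin (j : Fin N) : (Finset.Iic j).card - 1 = (j : ℕ) := by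
  rw [Fin.card_Iic]; rfl

lemma expDet_eq {a : Fin N → ℝ} (ha : StrictMono a) (b : Fin N → ℝ) :
    expDet N a b = vdm N a * (Rmat N a b).det := by
  classical
  set M : Matrix (Fin N) (Fin N) ℝ := Matrix.of fun j i =>
    if i ≤ j then ∏ l ∈ (Finset.Iic j).erase i, (a i - a l)⁻¹ else 0 with hM
  have hMR : M * (Matrix.of fun j k => Real.exp (a j * b k)) = Rmat N a b := by
    ext j k
    rw [Matrix.mul_apply]
    rw [Rmat, Matrix.of_apply, ← card_Iic_fin j,
      interpolate_coeff (ha.injective.injOn) (fun i => Real.exp (a i * b k))]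
    rw [← Finset.sum_subset (Finset.subset_univ (Finset.Iic j))]
    · refine Finset.sum_congr rfl fun i hi => ?_
      simp only [Finset.mem_Iic] at hi
      simp [hM, hi, mul_comm]
    · intro i _ hi
      simp only [Finset.mem_Iic] at hi
      simp [hM, hi]
  have hMtri : M.BlockTriangular OrderDual.toDual := by
    intro i j hij
    simp only [OrderDual.toDual_lt_toDual] at hij
    simp [hM, not_le.2 hij, le_of_lt hij]
  have hdetM : M.det = (vdm N a)⁻¹ := by
    rw [Matrix.det_of_lowerTriangular M hMtri, vdm_eq_Iio, ← Finset.prod_inv_distrib]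
    refine Finset.prod_congr rfl fun j _ => ?_
    simp only [hM, Matrix.of_apply, le_refl, if_pos, Matrix.diag]
    rw [Finset.Iic_erase, ← Finset.prod_inv_distrib]
  have hv : vdm N a ≠ 0 := ne_of_gt (vdm_pos ha)
  have hdet := congrArg Matrix.det hMR
  rw [Matrix.det_mul, hdetM] at hdet
  rw [expDet, ← hdet]
  field_simp

/-- Node polynomial `ω_j(X) = ∏_{i ≤ j} (X - a i)`. -/
noncomputable def nodePoly (j : Fin N) (a : Fin N → ℝ) : Polynomial ℝ :=
  ∏ i ∈ Finset.Iic j, (X - C (a i))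

lemma nodePoly_monic (j : Fin N) (a : Fin N → ℝ) : (nodePoly j a).Monic :=
  monic_prod_of_monic _ _ fun i _ => monic_X_sub_C (a i)

lemma nodePoly_natDegree (j : Fin N) (a : Fin N → ℝ) :
    (nodePoly j a).natDegree = (j : ℕ) + 1 := by
  rw [nodePoly, natDegree_prod _ _ (fun i _ => X_sub_C_ne_zero (a i))]
  simp [Fin.card_Iic]

lemma nodePoly_eval_node (j : Fin N) (a : Fin N → ℝ) {i : Fin N} (hi : i ∈ Finset.Iic j) :
    (nodePoly j a).eval (a i) = 0 := by
  rw [nodePoly, eval_prod]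
  exact Finset.prod_eq_zero hi (by simp)

/-- Recursion for `X^n %ₘ ω`. -/
lemma powMod_succ {ω : Polynomial ℝ} (hm : ω.Monic) (hd : 1 ≤ ω.natDegree) (n : ℕ) :
    X ^ (n + 1) %ₘ ω
      = X * (X ^ n %ₘ ω) - C ((X ^ n %ₘ ω).coeff (ω.natDegree - 1)) * ω := by
  obtain ⟨m', hm'⟩ : ∃ m', m' + 1 = ω.natDegree := ⟨ω.natDegree - 1, by omega⟩
  have hωdeg : ω.degree = (ω.natDegree : WithBot ℕ) := degree_eq_natDegree hm.ne_zero
  have hrdeg : (X ^ n %ₘ ω).degree < (ω.natDegree : WithBot ℕ) := by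
    rw [← hωdeg]; exact degree_modByMonic_lt _ hm
  have hsdeg :
      (X * (X ^ n %ₘ ω) - C ((X ^ n %ₘ ω).coeff (ω.natDegree - 1)) * ω).degree
        < (ω.natDegree : WithBot ℕ) := by
    rw [Polynomial.degree_lt_iff_coeff_zero]
    intro i hi
    rw [coeff_sub, coeff_C_mul]
    obtain ⟨i', rfl⟩ : ∃ i', i' + 1 = i := ⟨i - 1, by omega⟩
    rw [coeff_X_mul]
    rcases eq_or_lt_of_le hi with h | h
    · rw [← h, hm.coeff_natDegree, mul_one]
      have h1 : i' = ω.natDegree - 1 := by omega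
      rw [h1, sub_self]
    · rw [coeff_eq_zero_of_degree_lt
          (lt_of_lt_of_le hrdeg (by exact_mod_cast (by omega : ω.natDegree ≤ i'))),
        coeff_eq_zero_of_natDegree_lt (by omega : ω.natDegree < i' + 1)]
      simp
  have h0 : X ^ n %ₘ ω + ω * (X ^ n /ₘ ω) = X ^ n := modByMonic_add_div _ ω
  have hdvd : ω ∣ X ^ (n + 1)
      - (X * (X ^ n %ₘ ω) - C ((X ^ n %ₘ ω).coeff (ω.natDegree - 1)) * ω) := by
    refine ⟨X * (X ^ n /ₘ ω) + C ((X ^ n %ₘ ω).coeff (ω.natDegree - 1)), ?_⟩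
    linear_combination (-(X : Polynomial ℝ)) * h0
  rw [modByMonic_eq_of_dvd_sub hm hdvd,
    (Polynomial.modByMonic_eq_self_iff hm).2 (by rw [hωdeg]; exact hsdeg)]

lemma powMod_coeff_bound {ω : Polynomial ℝ} (hm : ω.Monic) (hd : 1 ≤ ω.natDegree)
    (hcoef : ∀ i, i < ω.natDegree → |ω.coeff i| ≤ 1) :
    ∀ n i, |(X ^ n %ₘ ω).coeff i| ≤ 2 ^ n := by
  have hcoef' : ∀ i, |ω.coeff i| ≤ 1 := by
    intro i
    rcases lt_trichotomy i ω.natDegree with h | h | h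
    · exact hcoef i h
    · rw [h, hm.coeff_natDegree]; norm_num
    · rw [coeff_eq_zero_of_natDegree_lt h]; norm_num
  intro n
  induction n with
  | zero =>
    intro i
    rw [pow_zero, (Polynomial.modByMonic_eq_self_iff hm).2]
    · rcases eq_or_ne i 0 with rfl | h
      · simp
      · simp [Polynomial.coeff_one, h]
    · rw [degree_one, degree_eq_natDegree hm.ne_zero]
      exact_mod_cast hd
  | succ n ih =>
    intro i
    rw [powMod_succ hm hd, coeff_sub, coeff_C_mul]
    have h1 : |(X * (X ^ n %ₘ ω)).coeff i| ≤ 2 ^ n := by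
      rcases Nat.eq_zero_or_eq_succ_pred i with rfl | hi
      · rw [Polynomial.mul_coeff_zero, Polynomial.coeff_X_zero, zero_mul, abs_zero]
        positivity
      · rw [hi, coeff_X_mul]; exact ih _
    calc |(X * (X ^ n %ₘ ω)).coeff i - (X ^ n %ₘ ω).coeff (ω.natDegree - 1) * ω.coeff i|
        ≤ |(X * (X ^ n %ₘ ω)).coeff i| + |(X ^ n %ₘ ω).coeff (ω.natDegree - 1)| * |ω.coeff i| := by
          rw [← abs_mul]; exact abs_sub _ _
      _ ≤ 2 ^ n + 2 ^ n * 1 :=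
          add_le_add h1 (mul_le_mul (ih _) (hcoef' i) (abs_nonneg _) (by positivity))
      _ = 2 ^ (n + 1) := by ring

lemma factor_coeff_cont (i : Fin N) (u : ℕ) :
    Continuous fun a : Fin N → ℝ => (X - C (a i)).coeff u := by
  rcases u with _ | _ | u
  · simp only [coeff_sub, Polynomial.coeff_X_zero, Polynomial.coeff_C_zero]
    exact continuous_const.sub (continuous_apply i)
  · have h : (fun a : Fin N → ℝ => (X - C (a i)).coeff 1) = fun _ => 1 := by
      funext a
      rw [coeff_sub, Polynomial.coeff_X_one, Polynomial.coeff_C]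
      norm_num
    rw [h]; exact continuous_const
  · have h : (fun a : Fin N → ℝ => (X - C (a i)).coeff (u + 1 + 1)) = fun _ => 0 := by
      funext a
      rw [coeff_sub, Polynomial.coeff_X, Polynomial.coeff_C]
      norm_num
    rw [h]; exact continuous_const

lemma prod_coeff_cont (s : Finset (Fin N)) (u : ℕ) :
    Continuous fun a : Fin N → ℝ => (∏ i ∈ s, (X - C (a i))).coeff u := by
  classical
  induction s using Finset.induction generalizing u with
  | empty => simpa using continuous_const
  | insert x s' hx ih =>
    have h : (fun a : Fin N → ℝ => (∏ i ∈ insert x s', (X - C (a i))).coeff u)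
        = fun a => ∑ p ∈ Finset.HasAntidiagonal.antidiagonal u,
            (X - C (a x)).coeff p.1 * (∏ i ∈ s', (X - C (a i))).coeff p.2 := by
      funext a
      rw [Finset.prod_insert hx, Polynomial.coeff_mul]
    rw [h]
    exact continuous_finset_sum _ fun p _ => (factor_coeff_cont x p.1).mul (ih p.2)

lemma nodePoly_coeff_cont (j : Fin N) (u : ℕ) :
    Continuous fun a : Fin N → ℝ => (nodePoly j a).coeff u :=
  prod_coeff_cont (Finset.Iic j) u

lemma powMod_coeff_cont (j : Fin N) :
    ∀ n u, Continuous fun a : Fin N → ℝ => (X ^ n %ₘ nodePoly j a).coeff u := by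
  intro n
  induction n with
  | zero =>
    intro u
    have h : (fun a : Fin N → ℝ => (X ^ 0 %ₘ nodePoly j a).coeff u)
        = fun _ => (1 : Polynomial ℝ).coeff u := by
      funext a
      rw [pow_zero, (modByMonic_eq_self_iff (nodePoly_monic j a)).2]
      rw [degree_one, degree_eq_natDegree (nodePoly_monic j a).ne_zero, nodePoly_natDegree]
      exact_mod_cast Nat.succ_pos _
    rw [h]; exact continuous_const
  | succ n ih =>
    intro u
    have h : (fun a : Fin N → ℝ => (X ^ (n + 1) %ₘ nodePoly j a).coeff u)
        = fun a => (X * (X ^ n %ₘ nodePoly j a)).coeff u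
            - (X ^ n %ₘ nodePoly j a).coeff (j : ℕ) * (nodePoly j a).coeff u := by
      funext a
      rw [powMod_succ (nodePoly_monic j a) (by rw [nodePoly_natDegree]; omega), coeff_sub,
        coeff_C_mul, nodePoly_natDegree, Nat.add_sub_cancel]
    rw [h]
    have h1 : Continuous fun a : Fin N → ℝ => (X * (X ^ n %ₘ nodePoly j a)).coeff u := by
      rcases Nat.eq_zero_or_eq_succ_pred u with rfl | hu
      · have h2 : (fun a : Fin N → ℝ => (X * (X ^ n %ₘ nodePoly j a)).coeff 0)
            = fun _ => (0 : ℝ) := by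
          funext a; rw [Polynomial.mul_coeff_zero, Polynomial.coeff_X_zero, zero_mul]
        rw [h2]; exact continuous_const
      · have h2 : (fun a : Fin N → ℝ => (X * (X ^ n %ₘ nodePoly j a)).coeff u)
            = fun a => (X ^ n %ₘ nodePoly j a).coeff (u - 1) := by
          funext a; rw [hu, coeff_X_mul, Nat.succ_sub_one]
        rw [h2]; exact ih _
    exact h1.sub ((ih _).mul (nodePoly_coeff_cont j u))

lemma powMod_coeff_at_zero (j : Fin N) (n : ℕ) :
    (X ^ n %ₘ nodePoly j (0 : Fin N → ℝ)).coeff (j : ℕ)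
      = if n = (j : ℕ) then 1 else 0 := by
  have hω : nodePoly j (0 : Fin N → ℝ) = X ^ ((j : ℕ) + 1) := by
    rw [nodePoly]
    simp only [Pi.zero_apply, map_zero, sub_zero]
    rw [Finset.prod_const, Fin.card_Iic]
  rcases le_or_gt n (j : ℕ) with h | h
  · rw [hω, (modByMonic_eq_self_iff (monic_X_pow _)).2
      (by rw [degree_X_pow, degree_X_pow]; exact_mod_cast by omega), Polynomial.coeff_X_pow]
    simp [eq_comm]
  · rw [hω, (modByMonic_eq_zero_iff_dvd (monic_X_pow _)).2 (pow_dvd_pow X (by omega)),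
      Polynomial.coeff_zero, if_neg (by omega)]

lemma interpolate_pow {a : Fin N → ℝ} (ha : StrictMono a) (j : Fin N) (n : ℕ) :
    Lagrange.interpolate (Finset.Iic j) a (fun i => (a i) ^ n)
      = X ^ n %ₘ nodePoly j a := by
  refine (Lagrange.eq_interpolate_of_eval_eq _ ha.injective.injOn ?_ ?_).symm
  · rw [Fin.card_Iic]
    refine lt_of_lt_of_le (degree_modByMonic_lt _ (nodePoly_monic j a)) ?_
    rw [degree_eq_natDegree (nodePoly_monic j a).ne_zero, nodePoly_natDegree]
  · intro i hi
    have h0 := modByMonic_add_div (X ^ n) (nodePoly j a)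
    have := congrArg (Polynomial.eval (a i)) h0
    rw [eval_add, eval_mul, nodePoly_eval_node j a hi, zero_mul, add_zero, eval_pow,
      eval_X] at this
    exact this

lemma sum_pow_weights {a : Fin N → ℝ} (ha : StrictMono a) (j : Fin N) (n : ℕ) :
    ∑ i ∈ Finset.Iic j, (a i) ^ n * ∏ l ∈ (Finset.Iic j).erase i, (a i - a l)⁻¹
      = (X ^ n %ₘ nodePoly j a).coeff (j : ℕ) := by
  rw [← interpolate_pow ha j n, ← card_Iic_fin j, interpolate_coeff ha.injective.injOn]

lemma Rmat_tsum {a : Fin N → ℝ} (ha : StrictMono a) (b : Fin N → ℝ) (j k : Fin N) :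
    Rmat N a b j k
      = ∑' n : ℕ, (b k ^ n / n.factorial) * (X ^ n %ₘ nodePoly j a).coeff (j : ℕ) := by
  have hexp : ∀ x : ℝ, Real.exp x = ∑' n : ℕ, x ^ n / n.factorial := by
    intro x
    rw [Real.exp_eq_exp_ℝ, NormedSpace.exp_eq_tsum_div]
  have hsummable : ∀ (i : Fin N) (c : ℝ), Summable fun n : ℕ =>
      (a i * b k) ^ n / n.factorial * c :=
    fun i c => (Real.summable_pow_div_factorial (a i * b k)).mul_right c
  conv_lhs => rw [Rmat, Matrix.of_apply, ← card_Iic_fin j,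
    interpolate_coeff ha.injective.injOn]
  calc ∑ i ∈ Finset.Iic j, Real.exp (a i * b k) * ∏ l ∈ (Finset.Iic j).erase i, (a i - a l)⁻¹
      = ∑ i ∈ Finset.Iic j, ∑' n : ℕ,
          (a i * b k) ^ n / n.factorial * ∏ l ∈ (Finset.Iic j).erase i, (a i - a l)⁻¹ := by
        refine Finset.sum_congr rfl fun i _ => ?_
        rw [hexp, Summable.tsum_mul_right _ (Real.summable_pow_div_factorial _)]
    _ = ∑' n : ℕ, ∑ i ∈ Finset.Iic j,
          (a i * b k) ^ n / n.factorial * ∏ l ∈ (Finset.Iic j).erase i, (a i - a l)⁻¹ := by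
        rw [Summable.tsum_finsetSum fun i _ => hsummable i _]
    _ = ∑' n : ℕ, (b k ^ n / n.factorial) * (X ^ n %ₘ nodePoly j a).coeff (j : ℕ) := by
        refine tsum_congr fun n => ?_
        rw [← sum_pow_weights ha j n, Finset.mul_sum]
        refine Finset.sum_congr rfl fun i _ => ?_
        rw [mul_pow]
        ring

lemma Rmat_entry_tendsto (b : Fin N → ℝ) (j k : Fin N) :
    Tendsto (fun a : Fin N → ℝ => Rmat N a b j k)
      (nhdsWithin 0 {a : Fin N → ℝ | StrictMono a})
      (nhds (b k ^ (j : ℕ) / (j : ℕ).factorial)) := by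
  set l := nhdsWithin (0 : Fin N → ℝ) {a : Fin N → ℝ | StrictMono a} with hl
  have key : Tendsto
      (fun a : Fin N → ℝ => ∑' n : ℕ,
        (b k ^ n / n.factorial) * (X ^ n %ₘ nodePoly j a).coeff (j : ℕ)) l
      (nhds (∑' n : ℕ, if n = (j : ℕ) then b k ^ (j : ℕ) / (j : ℕ).factorial else 0)) := by
    refine tendsto_tsum_of_dominated_convergence
      (bound := fun n => |b k| ^ n / n.factorial * 2 ^ n) ?_ ?_ ?_
    · refine Summable.congr (Real.summable_pow_div_factorial (2 * |b k|)) fun n => ?_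
      rw [mul_pow]
      ring
    · intro n
      have hc := ((powMod_coeff_cont j n (j : ℕ)).tendsto 0).mono_left
        (nhdsWithin_le_nhds (s := {a : Fin N → ℝ | StrictMono a}))
      rw [powMod_coeff_at_zero j n] at hc
      have h1 := hc.const_mul (b k ^ n / (n.factorial : ℝ))
      have h2 : (b k ^ n / n.factorial) * (if n = (j : ℕ) then (1 : ℝ) else 0)
          = (if n = (j : ℕ) then b k ^ (j : ℕ) / (j : ℕ).factorial else 0) := by
        split_ifs with h
        · subst h; ring
        · ring
      rw [h2] at h1
      exact h1
    · have hev : ∀ᶠ a in l, ∀ u ∈ Finset.range ((j : ℕ) + 1),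
          |(nodePoly j a).coeff u| ≤ 1 := by
        refine Filter.Eventually.filter_mono nhdsWithin_le_nhds ?_
        rw [Filter.eventually_all_finset]
        intro u hu
        have h0 : (nodePoly j (0 : Fin N → ℝ)).coeff u = 0 := by
          have hω : nodePoly j (0 : Fin N → ℝ) = X ^ ((j : ℕ) + 1) := by
            rw [nodePoly]
            simp only [Pi.zero_apply, map_zero, sub_zero]
            rw [Finset.prod_const, Fin.card_Iic]
          rw [hω, Polynomial.coeff_X_pow, if_neg]
          simp only [Finset.mem_range] at hu
          omega
        have hc := (nodePoly_coeff_cont j u).tendsto 0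
        rw [h0] at hc
        have habs : ∀ᶠ x : ℝ in nhds 0, |x| ≤ 1 := by
          filter_upwards [Metric.ball_mem_nhds (0 : ℝ) one_pos] with x hx
          rw [Metric.mem_ball, Real.dist_eq, sub_zero] at hx
          exact le_of_lt hx
        exact hc.eventually habs
      filter_upwards [hev] with a hA n
      have hb : ∀ i, i < (nodePoly j a).natDegree → |(nodePoly j a).coeff i| ≤ 1 := by
        intro i hi
        rw [nodePoly_natDegree] at hi
        exact hA i (Finset.mem_range.2 hi)
      have hbound := powMod_coeff_bound (nodePoly_monic j a)
        (by rw [nodePoly_natDegree]; omega) hb n (j : ℕ)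
      rw [Real.norm_eq_abs, abs_mul, abs_div, abs_pow, Nat.abs_cast]
      exact mul_le_mul le_rfl hbound (abs_nonneg _) (by positivity)
  rw [tsum_ite_eq ((j : ℕ)) (fun _ => b k ^ (j : ℕ) / ((j : ℕ).factorial : ℝ))] at key
  refine key.congr' ?_
  filter_upwards [self_mem_nhdsWithin] with a ha
  exact (Rmat_tsum ha b j k).symm
/-- Asymptotics of the exponential determinant: as `a → 0` within the Weyl
chamber, `det[e^{a_j b_k}] / h_N(a) → h_N(b) / ∏_{j=1}^N Γ(j)`,
where `Γ(j) = (j-1)!`. -/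
theorem expDet_div_vdm_tendsto
    (N : ℕ) (hN : 1 ≤ N) (b : Fin N → ℝ) :
    Tendsto (fun a : Fin N → ℝ => expDet N a b / vdm N a)
      (nhdsWithin 0 {a : Fin N → ℝ | StrictMono a})
      (nhds (vdm N b / ∏ j ∈ Finset.range N, (Nat.factorial j : ℝ))) := by
  classical
  set D : Matrix (Fin N) (Fin N) ℝ :=
    Matrix.of fun j k : Fin N => b k ^ (j : ℕ) / ((j : ℕ).factorial : ℝ) with hD
  have hdetD : D.det = vdm N b / ∏ j ∈ Finset.range N, (Nat.factorial j : ℝ) := by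
    have h1 : D = Matrix.of fun j k : Fin N =>
        (((j : ℕ).factorial : ℝ))⁻¹ * ((Matrix.vandermonde b).transpose j k) := by
      ext j k
      simp [hD, Matrix.vandermonde, div_eq_inv_mul]
    rw [h1, Matrix.det_mul_column, Matrix.det_transpose, Matrix.det_vandermonde,
      ← vdm_eq_Ioi]
    rw [Fin.prod_univ_eq_prod_range (fun i => ((Nat.factorial i : ℝ))⁻¹) N,
      Finset.prod_inv_distrib, inv_mul_eq_div]
  have hMat : Tendsto (fun a : Fin N → ℝ => Rmat N a b)
      (nhdsWithin 0 {a : Fin N → ℝ | StrictMono a}) (nhds D) := by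
    refine tendsto_pi_nhds.2 ?_
    intro j
    rw [tendsto_pi_nhds]
    intro k
    exact Rmat_entry_tendsto b j k
  have hdet : Tendsto (fun a : Fin N → ℝ => (Rmat N a b).det)
      (nhdsWithin 0 {a : Fin N → ℝ | StrictMono a}) (nhds D.det) :=
    ((Continuous.matrix_det continuous_id).tendsto D).comp hMat
  rw [hdetD] at hdet
  refine hdet.congr' ?_
  filter_upwards [self_mem_nhdsWithin] with a ha
  have hv : vdm N a ≠ 0 := ne_of_gt (vdm_pos ha)
  rw [expDet_eq ha b, mul_comm, mul_div_assoc, div_self hv, mul_one]
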